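/- arXiv:nlin/0503044 — 4 statements merged into one kernel-verified Lean document; each statement's English description precedes it below -/
import Mathlib

section
/- Let S_1, ..., S_{k+1} be random variables with values in a finite linearly ordered alphabet A, and let R_{k+1} = Σ_{i=1}^{k+1} 1[S_i ≤ S_{k+1}]. Fix a realization s_1, ..., s_k of S_1^k and suppose that every letter a ∈ A with P(S_{k+1} = a | S_1^k = s_1^k) > 0 appears among s_1, ..., s_k (i.e., its sample frequency ϑ_k(a) > 0). Then the map a ↦ R_{k+1}(a) is injective on the support of the conditional law of S_{k+1}, and consequently H(R_{k+1} | S_1^k = s_1^k) = H(S_{k+1} | S_1^k = s_1^k). -/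
open MeasureTheory ProbabilityTheory Filter Real

/-- Shannon entropy (base 2) of a random variable. -/
noncomputable def shEntropy {Ω : Type*} [MeasurableSpace Ω] {A : Type*}
    (μ : Measure Ω) (X : Ω → A) : ℝ :=
  -∑' a : A, (μ (X ⁻¹' {a})).toReal * Real.logb 2 (μ (X ⁻¹' {a})).toReal

open Classical in
/-- Rank variable `R_n(ω) = #{i : 1 ≤ i ≤ n, S_i(ω) ≤ S_n(ω)}`. -/
noncomputable def rankVar {Ω A : Type*} [LinearOrder A] (S : ℕ → Ω → A) (n : ℕ) (ω : Ω) : ℕ :=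
  ((Finset.Icc 1 n).filter (fun i => S i ω ≤ S n ω)).card

open Classical in
/-- Given a realization `s_1 … s_k`, the rank of the next observed letter `a` is the
deterministic function `R_{k+1}(a) = #{i ≤ k : s_i ≤ a} + 1`. -/
noncomputable def nextRank {A : Type*} [LinearOrder A] (k : ℕ) (s : ℕ → A) (a : A) : ℕ :=
  ((Finset.Icc 1 k).filter (fun i => s i ≤ a)).card + 1

private lemma nextRank_lt_of {A : Type*} [LinearOrder A] {k : ℕ} {s : ℕ → A} {a b : A}
    (hab : a < b) (hb : ∃ j ∈ Finset.Icc 1 k, s j = b) :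
    nextRank k s a < nextRank k s b := by
  classical
  obtain ⟨j, hj, hjb⟩ := hb
  unfold nextRank
  have hss : ((Finset.Icc 1 k).filter (fun i => s i ≤ a)) ⊂
      ((Finset.Icc 1 k).filter (fun i => s i ≤ b)) := by
    constructor
    · intro i hi
      rw [Finset.mem_filter] at hi ⊢
      exact ⟨hi.1, hi.2.trans hab.le⟩
    · intro hsub
      have hm := hsub (Finset.mem_filter.mpr ⟨hj, hjb.le⟩)
      rw [Finset.mem_filter] at hm
      exact absurd (hjb ▸ hm.2) hab.not_ge
  have := Finset.card_lt_card hss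
  omega

/-- If every letter of positive conditional probability for `S_{k+1}` given the
realization `S_1^k = s_1^k` already appears among `s_1,…,s_k`, then `a ↦ R_{k+1}(a)` is
injective on the conditional support, and hence
`H(R_{k+1} | S_1^k = s_1^k) = H(S_{k+1} | S_1^k = s_1^k)`. -/
theorem rank_injective_and_condEntropy_eq {Ω : Type*} [MeasurableSpace Ω]
    (N : ℕ) (μ : Measure Ω) [IsProbabilityMeasure μ]
    (S : ℕ → Ω → Fin N) (hS : ∀ i, Measurable (S i)) (k : ℕ) (s : ℕ → Fin N)
    (E : Set Ω) (hE : E = {ω | ∀ i ∈ Finset.Icc 1 k, S i ω = s i})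
    (hsupp : ∀ a : Fin N, μ[|E] (S (k + 1) ⁻¹' {a}) ≠ 0 → ∃ i ∈ Finset.Icc 1 k, s i = a) :
    Set.InjOn (nextRank k s) {a : Fin N | μ[|E] (S (k + 1) ⁻¹' {a}) ≠ 0}
      ∧ shEntropy (μ[|E]) (fun ω => rankVar S (k + 1) ω)
          = shEntropy (μ[|E]) (S (k + 1)) := by
  classical
  set X : Ω → Fin N := S (k + 1) with hX
  set μ' := μ[|E] with hμ'
  set f := nextRank k s with hf
  have hEmeas : MeasurableSet E := by
    rw [hE]
    have h2 : {ω | ∀ i ∈ Finset.Icc 1 k, S i ω = s i}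
        = ⋂ i ∈ Finset.Icc 1 k, (S i) ⁻¹' {s i} := by
      ext ω; simp
    rw [h2]
    exact Set.Finite.measurableSet_biInter (Finset.finite_toSet _)
      (fun i _ => (hS i) (measurableSet_singleton _))
  have hinj : Set.InjOn f {a : Fin N | μ' (X ⁻¹' {a}) ≠ 0} := by
    intro a ha b hb hfab
    by_contra hne
    rcases lt_or_gt_of_ne hne with h | h
    · exact (nextRank_lt_of h (hsupp b hb)).ne hfab
    · exact (nextRank_lt_of h (hsupp a ha)).ne' hfab
  refine ⟨hinj, ?_⟩
  have hXmeas : Measurable X := hS (k + 1)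
  have hcond : ∀ P Q : Set Ω, P ∩ E = Q ∩ E → μ' P = μ' Q := by
    intro P Q h
    rw [hμ', ProbabilityTheory.cond_apply hEmeas, ProbabilityTheory.cond_apply hEmeas,
      Set.inter_comm E P, Set.inter_comm E Q, h]
  have hrank : ∀ ω ∈ E, rankVar S (k + 1) ω = f (X ω) := by
    intro ω hω
    rw [hE] at hω
    rw [hf]
    unfold rankVar nextRank
    have hicc : Finset.Icc 1 (k + 1) = insert (k + 1) (Finset.Icc 1 k) := by
      ext i; simp [Finset.mem_Icc]; omega
    rw [hicc, Finset.filter_insert, if_pos le_rfl,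
      Finset.card_insert_of_notMem (by simp [Finset.mem_filter, Finset.mem_Icc])]
    congr 1
    refine congrArg Finset.card (Finset.filter_congr ?_)
    intro i hi
    rw [hω i hi]
  have hR : ∀ n : ℕ, μ' (rankVar S (k + 1) ⁻¹' {n}) = μ' (X ⁻¹' (f ⁻¹' {n})) := by
    intro n
    apply hcond
    ext ω
    by_cases hω : ω ∈ E
    · simp [hω, hrank ω hω]
    · simp [hω]
  have hBsum : ∀ B : Finset (Fin N), μ' (X ⁻¹' ↑B) = ∑ b ∈ B, μ' (X ⁻¹' {b}) := by
    intro B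
    have hU : X ⁻¹' ↑B = ⋃ b ∈ B, X ⁻¹' {b} := by ext ω; simp
    rw [hU, measure_biUnion_finset]
    · intro b _ c _ hbc
      rw [Function.onFun, Set.disjoint_left]
      rintro ω h1 h2
      simp only [Set.mem_preimage, Set.mem_singleton_iff] at h1 h2
      exact hbc (h1 ▸ h2)
    · exact fun b _ => hXmeas (measurableSet_singleton b)
  set T : Finset (Fin N) := Finset.univ.filter (fun a => μ' (X ⁻¹' {a}) ≠ 0) with hT
  have hfset : ∀ n : ℕ, (f ⁻¹' {n} : Set (Fin N)) =
      ↑(Finset.univ.filter (fun b => f b = n)) := by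
    intro n; ext b; simp
  have hzero : ∀ n : ℕ, n ∉ T.image f → μ' (X ⁻¹' (f ⁻¹' {n})) = 0 := by
    intro n hn
    rw [hfset, hBsum, Finset.sum_eq_zero]
    intro b hb
    rw [Finset.mem_filter] at hb
    by_contra hpb
    exact hn (Finset.mem_image.mpr ⟨b, Finset.mem_filter.mpr ⟨Finset.mem_univ b, hpb⟩, hb.2⟩)
  have hval : ∀ a ∈ T, μ' (X ⁻¹' (f ⁻¹' {f a})) = μ' (X ⁻¹' {a}) := by
    intro a ha
    rw [hfset, hBsum]
    rw [Finset.mem_filter] at ha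
    apply Finset.sum_eq_single_of_mem a (by simp)
    intro b hb hba
    rw [Finset.mem_filter] at hb
    by_contra hpb
    exact hba (hinj (Set.mem_setOf.mpr hpb) (Set.mem_setOf.mpr ha.2) hb.2)
  unfold shEntropy
  congr 1
  have hL : ∑' n : ℕ, (μ' ((fun ω => rankVar S (k + 1) ω) ⁻¹' {n})).toReal *
      Real.logb 2 (μ' ((fun ω => rankVar S (k + 1) ω) ⁻¹' {n})).toReal
      = ∑ n ∈ T.image f, (μ' (X ⁻¹' (f ⁻¹' {n}))).toReal *
        Real.logb 2 (μ' (X ⁻¹' (f ⁻¹' {n}))).toReal := by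
    rw [tsum_eq_sum (s := T.image f)]
    · apply Finset.sum_congr rfl
      intro n _
      rw [show (fun ω => rankVar S (k + 1) ω) ⁻¹' {n} = rankVar S (k + 1) ⁻¹' {n} from rfl, hR n]
    · intro n hn
      rw [show (fun ω => rankVar S (k + 1) ω) ⁻¹' {n} = rankVar S (k + 1) ⁻¹' {n} from rfl,
        hR n, hzero n hn]
      simp
  rw [hL, Finset.sum_image (fun a ha b hb hab =>
    hinj (Set.mem_setOf.mpr (Finset.mem_filter.mp ha).2)
      (Set.mem_setOf.mpr (Finset.mem_filter.mp hb).2) hab)]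
  rw [tsum_fintype]
  rw [← Finset.sum_subset (Finset.filter_subset _ Finset.univ : T ⊆ Finset.univ)]
  · apply Finset.sum_congr rfl
    intro a ha
    rw [hval a ha]
  · intro a _ ha
    rw [Finset.mem_filter, not_and] at ha
    have : μ' (X ⁻¹' {a}) = 0 := by
      by_contra h; exact (ha (Finset.mem_univ a)) h
    rw [this]
    simp
end

section
/- Let S_1, S_2, ... be i.i.d. random variables with P(S_n = 0) = P(S_n = 1) = 1/2, and let R_n denote the rank variables R_n = Σ_{i=1}^n 1[S_i ≤ S_n]. Then the conditional entropy satisfies H(R_{k+1}, R_{k+2} | S_1, ..., S_k) = 2·(1 − (3/2^{k+3})·log₂ 3), and hence H(R_{k+1}, R_{k+2} | S_1^k) → 2 = H(S_{k+1}, S_{k+2} | S_1^k) as k → ∞. -/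
/-!
Conditioned on the prefix `S_1 … S_k = b`, the pair `(S_{k+1}, S_{k+2})` is still uniform on
`{0,1}²`, and on that event the rank pair `(R_{k+1}, R_{k+2})` is a fixed function of it, depending
only on the number `m` of zeros in `b`. For `m < k` this function is injective, so
the conditional entropy is `2`; for the all-zero prefix (`m = k`) the outcomes `00`, `01`, `11` all
give ranks `(k+1, k+2)` and `10` gives `(k+1, k+1)`, so the entropy drops to `2 - (3/4) log₂ 3`.
Averaging over the `2^k` equally likely prefixes gives the formula.
-/

open MeasureTheory ProbabilityTheory Filter Real

/-- Conditional Shannon entropy `H(Y|Z) = Σ_z P(Z=z) H(Y | Z=z)`. -/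
noncomputable def condShEntropy {Ω : Type*} [MeasurableSpace Ω] {A B : Type*}
    (μ : Measure Ω) (Y : Ω → A) (Z : Ω → B) : ℝ :=
  ∑' b : B, (μ (Z ⁻¹' {b})).toReal * shEntropy (μ[|Z ⁻¹' {b}]) Y

open scoped ENNReal
open Finset

theorem shEntropy_congr_ae {Ω A : Type*} [MeasurableSpace Ω] {ν : Measure Ω} {X Y : Ω → A}
    (h : X =ᵐ[ν] Y) : shEntropy ν X = shEntropy ν Y := by
  simp only [shEntropy, measure_congr (h.preimage _)]

theorem condShEntropy_of_uniform {Ω A B : Type*} [MeasurableSpace Ω] [Fintype B] {μ : Measure Ω}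
    {Y : Ω → A} {Z : Ω → B} (hZ : ∀ b, μ (Z ⁻¹' {b}) = (Fintype.card B : ℝ≥0∞)⁻¹) :
    condShEntropy μ Y Z = (Fintype.card B : ℝ)⁻¹ * ∑ b, shEntropy (μ[|Z ⁻¹' {b}]) Y := by
  simp [condShEntropy, hZ, mul_sum]

section Uniform

variable {Ω T : Type*} [MeasurableSpace Ω] [Fintype T] [MeasurableSpace T]
  [MeasurableSingletonClass T] {ν : Measure Ω} {Y : Ω → T}

theorem shEntropy_comp_of_uniform {A : Type*} [DecidableEq A] (hY : Measurable Y)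
    (hunif : ∀ t, ν (Y ⁻¹' {t}) = (Fintype.card T : ℝ≥0∞)⁻¹) (f : T → A) :
    shEntropy ν (fun ω => f (Y ω))
      = -∑ t, (Fintype.card T : ℝ)⁻¹ * logb 2 (#{t' | f t' = f t} / Fintype.card T) := by
  have hmass : ∀ a, (ν ((fun ω => f (Y ω)) ⁻¹' {a})).toReal
      = #{t | f t = a} / Fintype.card T := by
    intro a
    have hpre : (fun ω => f (Y ω)) ⁻¹' {a} = Y ⁻¹' ↑({t | f t = a} : Finset T) := by
      ext; simp
    rw [hpre, ← sum_measure_preimage_singleton _ fun t _ => hY (measurableSet_singleton t)]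
    simp [hunif, div_eq_mul_inv]
  rw [shEntropy, tsum_eq_sum (s := univ.image f), neg_inj]
  · simp only [hmass]
    refine sum_image' _ fun t _ => ?_
    rw [sum_congr rfl fun j hj => by rw [(mem_filter.1 hj).2], sum_const, nsmul_eq_mul]
    ring
  · intro a ha
    have : #({t | f t = a} : Finset T) = 0 := by
      simpa [Finset.card_eq_zero, filter_eq_empty_iff] using ha
    simp [hmass, this]

theorem shEntropy_comp_of_uniform_of_injective {A : Type*} (hY : Measurable Y)
    (hunif : ∀ t, ν (Y ⁻¹' {t}) = (Fintype.card T : ℝ≥0∞)⁻¹) {f : T → A}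
    (hf : Function.Injective f) :
    shEntropy ν (fun ω => f (Y ω)) = logb 2 (Fintype.card T) := by
  classical
  have hfiber : ∀ t, #{t' | f t' = f t} = 1 := fun t =>
    card_eq_one.2 ⟨t, by ext; simp [hf.eq_iff]⟩
  simp only [shEntropy_comp_of_uniform hY hunif, hfiber, sum_const, card_univ, nsmul_eq_mul]
  rw [Nat.cast_one, one_div, logb_inv]
  rcases eq_or_ne (Fintype.card T : ℝ) 0 with h | h
  · simp [h]
  · field_simp

end Uniform

theorem logb_two_four : logb 2 4 = 2 := by
  rw [show (4 : ℝ) = 2 ^ 2 by norm_num, logb_pow, logb_self_eq_one one_lt_two]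
  norm_num

/-- `(R_{k+1}, R_{k+2})` as a function of `(S_{k+1}, S_{k+2})` when exactly `m` of the values
`S_1, …, S_k` are `0`. -/
def rankPair (m k : ℕ) (t : Fin 2 × Fin 2) : ℕ × ℕ :=
  (if t.1 = 1 then k + 1 else m + 1, if t.2 = 1 then k + 2 else if t.1 = 1 then m + 1 else m + 2)

theorem rankVar_succ {Ω A : Type*} [LinearOrder A] (S : ℕ → Ω → A) (n : ℕ) (ω : Ω) :
    rankVar S (n + 1) ω = #{i ∈ Icc 1 n | S i ω ≤ S (n + 1) ω} + 1 := by
  rw [rankVar, ← insert_Icc_right_eq_Icc_add_one (by omega), filter_insert, if_pos le_rfl,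
    card_insert_of_notMem (by simp)]

theorem card_filter_le_fin_two {ι : Type*} (s : Finset ι) (x : ι → Fin 2) (v : Fin 2) :
    #{i ∈ s | x i ≤ v} = if v = 1 then #s else #{i ∈ s | x i = 0} := by
  fin_cases v
  · simp
  · exact congrArg card (filter_true_of_mem fun i _ => Fin.le_last (x i))

theorem card_filter_Icc_one_eq_card_filter_fin (p : ℕ → Prop) [DecidablePred p] (k : ℕ) :
    #{i ∈ Icc 1 k | p i} = #{i : Fin k | p (i + 1)} := by
  symm
  refine card_nbij (fun i => i.1 + 1) ?_ ?_ ?_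
  · intro i hi
    simp only [mem_filter, mem_univ, true_and, mem_coe, mem_Icc] at hi ⊢
    exact ⟨by omega, hi⟩
  · intro i _ j _ h
    exact Fin.ext (by simpa using h)
  · intro n hn
    simp only [coe_filter, mem_Icc, Set.mem_ofPred_eq] at hn
    refine ⟨⟨n - 1, by omega⟩, ?_, by simp only [Nat.sub_add_cancel hn.1.1]⟩
    simpa [Nat.sub_add_cancel hn.1.1] using hn.2

theorem rankVar_pair_eq_rankPair {Ω : Type*} (S : ℕ → Ω → Fin 2) (k : ℕ) (ω : Ω) :
    (rankVar S (k + 1) ω, rankVar S (k + 2) ω)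
      = rankPair #{i ∈ Icc 1 k | S i ω = 0} k (S (k + 1) ω, S (k + 2) ω) := by
  have hIcc : Icc 1 (k + 1) = insert (k + 1) (Icc 1 k) :=
    (insert_Icc_right_eq_Icc_add_one (by omega)).symm
  rw [rankVar_succ, rankVar_succ, hIcc, card_filter_le_fin_two, card_filter_le_fin_two,
    filter_insert]
  generalize S (k + 1) ω = a, S (k + 2) ω = b
  fin_cases a <;> fin_cases b <;> simp [rankPair]

theorem rankPair_injective {m k : ℕ} (h : m < k) : Function.Injective (rankPair m k) := by
  rintro ⟨a, a'⟩ ⟨c, c'⟩ h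
  fin_cases a <;> fin_cases a' <;> fin_cases c <;> fin_cases c' <;> simp [rankPair] at h ⊢ <;> omega

theorem rankPair_self_eq_iff (k : ℕ) (t t' : Fin 2 × Fin 2) :
    rankPair k k t = rankPair k k t' ↔ (t = (1, 0) ↔ t' = (1, 0)) := by
  rcases t with ⟨a, a'⟩; rcases t' with ⟨c, c'⟩
  fin_cases a <;> fin_cases a' <;> fin_cases c <;> fin_cases c' <;> simp [rankPair]

theorem shEntropy_rankPair_self_of_uniform {Ω : Type*} [MeasurableSpace Ω] {ν : Measure Ω}
    {Y : Ω → Fin 2 × Fin 2} (hY : Measurable Y)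
    (hunif : ∀ t, ν (Y ⁻¹' {t}) = (Fintype.card (Fin 2 × Fin 2) : ℝ≥0∞)⁻¹) (k : ℕ) :
    shEntropy ν (fun ω => rankPair k k (Y ω)) = 2 - 3 / 4 * logb 2 3 := by
  have h34 : logb 2 (3 / 4) = logb 2 3 - 2 := by
    rw [logb_div (by norm_num) (by norm_num), logb_two_four]
  have h14 : logb 2 (1 / 4) = -2 := by rw [one_div, logb_inv, logb_two_four]
  rw [shEntropy_comp_of_uniform hY hunif]
  have hfiber : ∀ t : Fin 2 × Fin 2,
      #{t' : Fin 2 × Fin 2 | t' = (1, 0) ↔ t = (1, 0)} = if t = (1, 0) then 1 else 3 := by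
    decide
  simp only [rankPair_self_eq_iff, hfiber, Fintype.sum_prod_type, Fin.sum_univ_two]
  norm_num [h34, h14]
  ring

section Independent

variable {Ω : Type*} [MeasurableSpace Ω] {μ : Measure Ω}

theorem measure_forall_eq_of_iIndepFun {ι β : Type*} [Fintype ι] [MeasurableSpace β]
    [MeasurableSingletonClass β] {X : ι → Ω → β} (hX : iIndepFun X μ) {p : ℝ≥0∞}
    (hp : ∀ i v, μ (X i ⁻¹' {v}) = p) (c : ι → β) :
    μ {ω | ∀ i, X i ω = c i} = p ^ Fintype.card ι := by
  have : {ω | ∀ i, X i ω = c i} = ⋂ i ∈ (univ : Finset ι), X i ⁻¹' {c i} := by ext; simp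
  rw [this, hX.measure_inter_preimage_eq_mul _ fun i _ => measurableSet_singleton (c i)]
  simp [hp]

variable {S : ℕ → Ω → Fin 2}

theorem measure_forall_succ_eq (hindep : iIndepFun S μ) (hfair : ∀ n v, μ (S n ⁻¹' {v}) = 2⁻¹)
    {n : ℕ} (c : Fin n → Fin 2) :
    μ {ω | ∀ i : Fin n, S (i.1 + 1) ω = c i} = (2 ^ n)⁻¹ := by
  have hinj : Function.Injective fun i : Fin n => i.1 + 1 :=
    fun i j h => Fin.ext (by simpa using h)
  simpa [ENNReal.inv_pow] using
    measure_forall_eq_of_iIndepFun (X := fun i : Fin n => S (i.1 + 1))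
      (hindep.precomp hinj) (fun i => hfair (i.1 + 1)) c

theorem measure_prefix_eq (hindep : iIndepFun S μ) (hfair : ∀ n v, μ (S n ⁻¹' {v}) = 2⁻¹)
    {k : ℕ} (b : Fin k → Fin 2) :
    μ ((fun ω (i : Fin k) => S (i.1 + 1) ω) ⁻¹' {b})
      = (Fintype.card (Fin k → Fin 2) : ℝ≥0∞)⁻¹ := by
  rw [show (fun ω (i : Fin k) => S (i.1 + 1) ω) ⁻¹' {b} = {ω | ∀ i, S (i.1 + 1) ω = b i} from
    Set.ext fun _ => funext_iff, measure_forall_succ_eq hindep hfair b]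
  simp

theorem cond_prefix_pair_eq (hmeas : ∀ n, Measurable (S n)) (hindep : iIndepFun S μ)
    (hfair : ∀ n v, μ (S n ⁻¹' {v}) = 2⁻¹) {k : ℕ} (b : Fin k → Fin 2) (t : Fin 2 × Fin 2) :
    μ[|(fun ω (i : Fin k) => S (i.1 + 1) ω) ⁻¹' {b}] ((fun ω => (S (k + 1) ω, S (k + 2) ω)) ⁻¹' {t})
      = (Fintype.card (Fin 2 × Fin 2) : ℝ≥0∞)⁻¹ := by
  have hE : MeasurableSet ((fun ω (i : Fin k) => S (i.1 + 1) ω) ⁻¹' {b}) :=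
    measurable_pi_lambda _ (fun i => hmeas _) (measurableSet_singleton b)
  have hinter : (fun ω (i : Fin k) => S (i.1 + 1) ω) ⁻¹' {b}
      ∩ (fun ω => (S (k + 1) ω, S (k + 2) ω)) ⁻¹' {t}
      = {ω | ∀ i : Fin (k + 2),
          S (i.1 + 1) ω = Fin.snoc (α := fun _ => Fin 2) (Fin.snoc b t.1) t.2 i} := by
    ext ω
    simp [Fin.forall_fin_succ', funext_iff, Prod.ext_iff, and_assoc]
  rw [cond_apply hE, hinter, measure_forall_succ_eq hindep hfair,
    measure_prefix_eq hindep hfair]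
  simp only [Fintype.card_fun, Fintype.card_prod, Fintype.card_fin, Nat.cast_pow, Nat.cast_ofNat,
    inv_inv, pow_add]
  rw [ENNReal.mul_inv (by simp) (by simp), ← mul_assoc, ENNReal.mul_inv_cancel (by simp) (by simp),
    one_mul]
  norm_num

theorem shEntropy_cond_prefix_pair (hmeas : ∀ n, Measurable (S n)) (hindep : iIndepFun S μ)
    (hfair : ∀ n v, μ (S n ⁻¹' {v}) = 2⁻¹) {k : ℕ} (b : Fin k → Fin 2) :
    shEntropy (μ[|(fun ω (i : Fin k) => S (i.1 + 1) ω) ⁻¹' {b}])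
      (fun ω => (S (k + 1) ω, S (k + 2) ω)) = 2 := by
  refine (shEntropy_comp_of_uniform_of_injective (f := id) ((hmeas _).prodMk (hmeas _))
    (cond_prefix_pair_eq hmeas hindep hfair b) Function.injective_id).trans ?_
  simpa using logb_two_four

theorem shEntropy_cond_prefix_rankVar_pair (hmeas : ∀ n, Measurable (S n))
    (hindep : iIndepFun S μ) (hfair : ∀ n v, μ (S n ⁻¹' {v}) = 2⁻¹) {k : ℕ}
    (b : Fin k → Fin 2) :
    shEntropy (μ[|(fun ω (i : Fin k) => S (i.1 + 1) ω) ⁻¹' {b}])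
      (fun ω => (rankVar S (k + 1) ω, rankVar S (k + 2) ω))
      = if b = 0 then 2 - 3 / 4 * logb 2 3 else 2 := by
  have hE : MeasurableSet ((fun ω (i : Fin k) => S (i.1 + 1) ω) ⁻¹' {b}) :=
    measurable_pi_lambda _ (fun i => hmeas _) (measurableSet_singleton b)
  have hae : (fun ω => (rankVar S (k + 1) ω, rankVar S (k + 2) ω))
      =ᵐ[μ[|(fun ω (i : Fin k) => S (i.1 + 1) ω) ⁻¹' {b}]]
        fun ω => rankPair #{i | b i = 0} k (S (k + 1) ω, S (k + 2) ω) := by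
    filter_upwards [ae_cond_mem hE] with ω hω
    rw [rankVar_pair_eq_rankPair, card_filter_Icc_one_eq_card_filter_fin (S · ω = 0)]
    simp only [Set.mem_preimage, Set.mem_singleton_iff] at hω
    simp only [← hω]
  have hY := (hmeas (k + 1)).prodMk (hmeas (k + 2))
  have hunif := cond_prefix_pair_eq hmeas hindep hfair b
  rw [shEntropy_congr_ae hae]
  split_ifs with hb
  · have hm : #{i | b i = 0} = k := by simp [hb]
    rw [hm, shEntropy_rankPair_self_of_uniform hY hunif]
  · have hm : #{i | b i = 0} < k := by
      refine (card_filter_le _ _).trans_eq (card_fin k) |>.lt_of_ne fun h => hb ?_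
      exact funext fun i => card_filter_eq_iff.1 (h.trans (card_fin k).symm) i (mem_univ i)
    rw [shEntropy_comp_of_uniform_of_injective hY hunif (rankPair_injective hm)]
    simpa using logb_two_four

theorem condShEntropy_rankVar_pair (hmeas : ∀ n, Measurable (S n)) (hindep : iIndepFun S μ)
    (hfair : ∀ n v, μ (S n ⁻¹' {v}) = 2⁻¹) (k : ℕ) :
    condShEntropy μ (fun ω => (rankVar S (k + 1) ω, rankVar S (k + 2) ω))
        (fun ω (i : Fin k) => S (i.1 + 1) ω)
      = 2 * (1 - 3 / 2 ^ (k + 3) * logb 2 3) := by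
  rw [condShEntropy_of_uniform (measure_prefix_eq hindep hfair),
    sum_congr rfl fun b _ => shEntropy_cond_prefix_rankVar_pair hmeas hindep hfair b]
  simp only [sum_ite, filter_eq', filter_ne', mem_univ, if_true, sum_const, card_singleton,
    card_erase_of_mem, card_univ, Fintype.card_pi, prod_const, Fintype.card_fin, nsmul_eq_mul]
  rw [Nat.cast_sub Nat.one_le_two_pow]
  push_cast
  rw [pow_add]
  field_simp
  ring

theorem condShEntropy_pair (hmeas : ∀ n, Measurable (S n)) (hindep : iIndepFun S μ)
    (hfair : ∀ n v, μ (S n ⁻¹' {v}) = 2⁻¹) (k : ℕ) :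
    condShEntropy μ (fun ω => (S (k + 1) ω, S (k + 2) ω)) (fun ω (i : Fin k) => S (i.1 + 1) ω)
      = 2 := by
  rw [condShEntropy_of_uniform (measure_prefix_eq hindep hfair),
    sum_congr rfl fun b _ => shEntropy_cond_prefix_pair hmeas hindep hfair b]
  simp

end Independent

theorem bernoulli_rank_condEntropy_general {Ω : Type*} [MeasurableSpace Ω]
    (μ : Measure Ω)
    (S : ℕ → Ω → Fin 2) (hmeas : ∀ n, Measurable (S n))
    (hindep : iIndepFun S μ)
    (hfair : ∀ n, μ (S n ⁻¹' {0}) = 1/2 ∧ μ (S n ⁻¹' {1}) = 1/2) :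
    (∀ k : ℕ,
        condShEntropy μ (fun ω => (rankVar S (k + 1) ω, rankVar S (k + 2) ω))
            (fun ω => fun i : Fin k => S (i.1 + 1) ω)
          = 2 * (1 - 3 / 2 ^ (k + 3) * Real.logb 2 3))
      ∧ Filter.Tendsto
          (fun k : ℕ =>
            condShEntropy μ (fun ω => (rankVar S (k + 1) ω, rankVar S (k + 2) ω))
              (fun ω => fun i : Fin k => S (i.1 + 1) ω))
          Filter.atTop (nhds 2)
      ∧ ∀ k : ℕ,
          condShEntropy μ (fun ω => (S (k + 1) ω, S (k + 2) ω))
            (fun ω => fun i : Fin k => S (i.1 + 1) ω) = 2 := by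
  have hfair' : ∀ n v, μ (S n ⁻¹' {v}) = 2⁻¹ := fun n =>
    Fin.forall_fin_two.2 (by simpa [one_div] using hfair n)
  have hrank := condShEntropy_rankVar_pair hmeas hindep hfair'
  refine ⟨hrank, ?_, condShEntropy_pair hmeas hindep hfair'⟩
  have hlim : Tendsto (fun k : ℕ => 3 / (2 : ℝ) ^ (k + 3)) atTop (nhds 0) :=
    tendsto_const_nhds.div_atTop
      ((tendsto_pow_atTop_atTop_of_one_lt one_lt_two).comp (tendsto_add_atTop_nat 3))
  simpa [hrank] using ((hlim.mul_const (logb 2 3)).const_sub 1).const_mul 2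

/-- For i.i.d. fair Bernoulli variables `S_n ∈ {0,1}`,
`H(R_{k+1}, R_{k+2} | S_1,…,S_k) = 2 (1 − (3/2^{k+3}) log₂ 3)` for every `k`,
and hence `H(R_{k+1}, R_{k+2} | S_1^k) → 2 = H(S_{k+1}, S_{k+2} | S_1^k)` as `k → ∞`. -/
theorem bernoulli_rank_condEntropy {Ω : Type*} [MeasurableSpace Ω]
    (μ : Measure Ω) [IsProbabilityMeasure μ]
    (S : ℕ → Ω → Fin 2) (hmeas : ∀ n, Measurable (S n))
    (hindep : iIndepFun S μ)
    (hfair : ∀ n, μ (S n ⁻¹' {0}) = 1/2 ∧ μ (S n ⁻¹' {1}) = 1/2) :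
    (∀ k : ℕ,
        condShEntropy μ (fun ω => (rankVar S (k + 1) ω, rankVar S (k + 2) ω))
            (fun ω => fun i : Fin k => S (i.1 + 1) ω)
          = 2 * (1 - 3 / 2 ^ (k + 3) * Real.logb 2 3))
      ∧ Filter.Tendsto
          (fun k : ℕ =>
            condShEntropy μ (fun ω => (rankVar S (k + 1) ω, rankVar S (k + 2) ω))
              (fun ω => fun i : Fin k => S (i.1 + 1) ω))
          Filter.atTop (nhds 2)
      ∧ ∀ k : ℕ,
          condShEntropy μ (fun ω => (S (k + 1) ω, S (k + 2) ω))
            (fun ω => fun i : Fin k => S (i.1 + 1) ω) = 2 :=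
  bernoulli_rank_condEntropy_general μ S hmeas hindep hfair
end

section
/- For an ergodic stationary finite-alphabet stochastic process S = (S_n), the permutation entropy rate exists and equals the Shannon entropy rate: lim_{L→∞} (1/(L−1)) H(R_1, ..., R_L) = lim_{L→∞} (1/L) H(S_1, ..., S_L), where R_n are the rank variables of the process. -/
/-!
The block entropies `H_L = H(S_1, …, S_L)` of a stationary process are subadditive, so `H_L / L`
converges (Fekete). The rank vector `(R_1, …, R_L)` is a function of the word `(S_1, …, S_L)`;
conversely the word is recovered from its ranks together with its cumulative letter counts
`x ↦ #{i ≤ L | S_i ≤ x}`, which take at most `(L + 1) ^ |A|` values. Hence the entropies of the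
word and of its rank vector differ by at most `|A| log₂ (L + 1) = o(L)`.
-/

open MeasureTheory ProbabilityTheory Filter Real

open Topology

namespace Real

theorem negMulLog_le_neg_mul_log_add_sub {p r : ℝ} (hp : 0 ≤ p) (hr : 0 ≤ r)
    (hpr : 0 < p → 0 < r) : negMulLog p ≤ -p * log r + (r - p) := by
  rcases hp.eq_or_lt with rfl | hp
  · simpa using hr
  have hr := hpr hp
  have := log_le_sub_one_of_pos (div_pos hr hp)
  rw [log_div hr.ne' hp.ne'] at this
  have := mul_le_mul_of_nonneg_left this hp.le
  rw [mul_sub, mul_sub, mul_div_cancel₀ _ hp.ne', mul_one] at this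
  rw [negMulLog]
  linarith

theorem neg_mul_log_le_negMulLog {p q : ℝ} (hp : 0 ≤ p) (hpq : p ≤ q) :
    -p * log q ≤ negMulLog p := by
  rcases hp.eq_or_lt with rfl | hp
  · simp
  rw [negMulLog, neg_mul, neg_mul, neg_le_neg_iff]
  exact mul_le_mul_of_nonneg_left (log_le_log hp hpq) hp.le

theorem negMulLog_le_of_le_of_le {p x y : ℝ} (hp : 0 ≤ p) (hx : p ≤ x) (hy : p ≤ y) :
    negMulLog p ≤ -p * log x + -p * log y + (x * y - p) := by
  rcases hp.eq_or_lt with rfl | hp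
  · simpa using mul_nonneg hx hy
  have hxy := mul_pos (hp.trans_le hx) (hp.trans_le hy)
  have := negMulLog_le_neg_mul_log_add_sub hp.le hxy.le fun _ => hxy
  rwa [log_mul (hp.trans_le hx).ne' (hp.trans_le hy).ne', mul_add] at this

end Real

section Entropy

variable {Ω B C : Type*} [MeasurableSpace Ω] {μ : Measure Ω}

theorem shEntropy_eq_sum_negMulLog [Fintype B] (X : Ω → B) :
    shEntropy μ X = (∑ b, negMulLog (μ.real (X ⁻¹' {b}))) / log 2 := by
  simp only [shEntropy, tsum_fintype, Finset.sum_div, ← Finset.sum_neg_distrib, negMulLog,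
    logb, measureReal_def]
  refine Finset.sum_congr rfl fun b _ => by ring

theorem shEntropy_comp_of_injective (X : Ω → B) {f : B → C} (hf : Function.Injective f) :
    shEntropy μ (f ∘ X) = shEntropy μ X := by
  unfold shEntropy
  congr 1
  rw [← hf.tsum_eq]
  · simp only [Set.preimage_comp, ← Set.image_singleton, Set.preimage_image_eq _ hf]
  · intro c hc
    by_contra hcf
    refine hc ?_
    have : (f ∘ X) ⁻¹' {c} = ∅ := by
      ext ω; simpa using fun h => hcf ⟨X ω, h⟩
    simp [this]

theorem shEntropy_comp_measurePreserving [MeasurableSpace B] [MeasurableSingletonClass B]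
    {X : Ω → B} (hX : Measurable X) {T : Ω → Ω} (hT : MeasurePreserving T μ μ) :
    shEntropy μ (X ∘ T) = shEntropy μ X := by
  simp only [shEntropy, Set.preimage_comp,
    hT.measure_preimage (hX (measurableSet_singleton _)).nullMeasurableSet]

section Finite

variable [Fintype B] {X : Ω → B}

theorem shEntropy_nonneg [IsProbabilityMeasure μ] : 0 ≤ shEntropy μ X := by
  rw [shEntropy_eq_sum_negMulLog]
  exact div_nonneg (Finset.sum_nonneg fun b _ => negMulLog_nonneg measureReal_nonneg
    (measureReal_le_one (μ := μ))) (log_nonneg one_le_two)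

variable [MeasurableSpace B] [MeasurableSingletonClass B]

theorem sum_measureReal_preimage_mul_comp [IsFiniteMeasure μ] [Fintype C] (hX : Measurable X)
    (f : B → C) (φ : C → ℝ) :
    ∑ b, μ.real (X ⁻¹' {b}) * φ (f b) = ∑ c, μ.real ((f ∘ X) ⁻¹' {c}) * φ c := by
  classical
  have hfiber : ∀ c, μ.real ((f ∘ X) ⁻¹' {c}) = ∑ b with f b = c, μ.real (X ⁻¹' {b}) := by
    intro c
    rw [sum_measureReal_preimage_singleton _ fun b _ => hX (measurableSet_singleton b)]
    congr 1; ext ω; simp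
  simp_rw [hfiber, Finset.sum_mul]
  rw [← Finset.sum_fiberwise Finset.univ f]
  refine Finset.sum_congr rfl fun c _ => Finset.sum_congr rfl fun b hb => ?_
  rw [(Finset.mem_filter.mp hb).2]

variable [IsProbabilityMeasure μ]

theorem sum_measureReal_preimage_singleton_eq_one (hX : Measurable X) :
    ∑ b, μ.real (X ⁻¹' {b}) = 1 := by
  rw [sum_measureReal_preimage_singleton _ fun b _ => hX (measurableSet_singleton b)]
  simp

theorem shEntropy_comp_le [Fintype C] (hX : Measurable X) (f : B → C) :
    shEntropy μ (f ∘ X) ≤ shEntropy μ X := by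
  classical
  rw [shEntropy_eq_sum_negMulLog, shEntropy_eq_sum_negMulLog]
  gcongr ?_ / _
  calc ∑ c, negMulLog (μ.real ((f ∘ X) ⁻¹' {c}))
      = ∑ b, μ.real (X ⁻¹' {b}) * -log (μ.real ((f ∘ X) ⁻¹' {f b})) := by
        rw [sum_measureReal_preimage_mul_comp hX f fun c => -log (μ.real ((f ∘ X) ⁻¹' {c}))]
        simp only [negMulLog, neg_mul, mul_neg]
    _ ≤ ∑ b, negMulLog (μ.real (X ⁻¹' {b})) := by
        refine Finset.sum_le_sum fun b _ => ?_
        rw [mul_neg, ← neg_mul]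
        refine neg_mul_log_le_negMulLog measureReal_nonneg (measureReal_mono ?_)
        intro ω hω
        simp_all

theorem shEntropy_le_logb_card (hX : Measurable X) :
    shEntropy μ X ≤ logb 2 (Fintype.card B) := by
  have hsum := sum_measureReal_preimage_singleton_eq_one (μ := μ) hX
  have hcard : (0 : ℝ) < Fintype.card B := by
    have : Nonempty B := by
      by_contra h
      simp [not_nonempty_iff.mp h] at hsum
    exact_mod_cast Fintype.card_pos
  rw [shEntropy_eq_sum_negMulLog, logb]
  gcongr ?_ / _
  -- Gibbs' inequality against the uniform distribution
  calc ∑ b, negMulLog (μ.real (X ⁻¹' {b}))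
      ≤ ∑ b, (-μ.real (X ⁻¹' {b}) * log (Fintype.card B)⁻¹
          + ((Fintype.card B : ℝ)⁻¹ - μ.real (X ⁻¹' {b}))) :=
        Finset.sum_le_sum fun b _ => negMulLog_le_neg_mul_log_add_sub measureReal_nonneg
          (inv_nonneg.mpr hcard.le) fun _ => inv_pos.mpr hcard
    _ = log (Fintype.card B) := by
        rw [Finset.sum_add_distrib, Finset.sum_sub_distrib, ← Finset.sum_mul,
          Finset.sum_neg_distrib, hsum, Finset.sum_const, Finset.card_univ, nsmul_eq_mul,
          mul_inv_cancel₀ hcard.ne', log_inv]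
        ring

theorem shEntropy_prod_le_add [Fintype C] [MeasurableSpace C] [MeasurableSingletonClass C]
    {Y : Ω → C} (hX : Measurable X) (hY : Measurable Y) :
    shEntropy μ (fun ω => (X ω, Y ω)) ≤ shEntropy μ X + shEntropy μ Y := by
  classical
  set Z : Ω → B × C := fun ω => (X ω, Y ω)
  have hZ : Measurable Z := hX.prodMk hY
  set p : B × C → ℝ := fun bc => μ.real (Z ⁻¹' {bc})
  set x : B → ℝ := fun b => μ.real (X ⁻¹' {b})
  set y : C → ℝ := fun c => μ.real (Y ⁻¹' {c})
  have hpx : ∀ bc, p bc ≤ x bc.1 := fun bc => measureReal_mono fun ω (hω : Z ω = bc) => by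
    simp [← hω, Z]
  have hpy : ∀ bc, p bc ≤ y bc.2 := fun bc => measureReal_mono fun ω (hω : Z ω = bc) => by
    simp [← hω, Z]
  have hp1 : ∑ bc, p bc = 1 := sum_measureReal_preimage_singleton_eq_one hZ
  -- Gibbs' inequality against the product of the marginals
  have hterm : ∀ bc, negMulLog (p bc)
      ≤ -p bc * log (x bc.1) + -p bc * log (y bc.2) + (x bc.1 * y bc.2 - p bc) := fun bc =>
    negMulLog_le_of_le_of_le measureReal_nonneg (hpx bc) (hpy bc)
  have hmarg_x : ∑ bc, p bc * log (x bc.1) = ∑ b, x b * log (x b) :=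
    sum_measureReal_preimage_mul_comp hZ Prod.fst fun b => log (x b)
  have hmarg_y : ∑ bc, p bc * log (y bc.2) = ∑ c, y c * log (y c) :=
    sum_measureReal_preimage_mul_comp hZ Prod.snd fun c => log (y c)
  have hprod : ∑ bc : B × C, x bc.1 * y bc.2 = 1 := by
    rw [Fintype.sum_prod_type, ← Finset.sum_mul_sum, sum_measureReal_preimage_singleton_eq_one hX,
      sum_measureReal_preimage_singleton_eq_one hY, one_mul]
  rw [shEntropy_eq_sum_negMulLog, shEntropy_eq_sum_negMulLog, shEntropy_eq_sum_negMulLog,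
    ← add_div]
  gcongr ?_ / _
  calc ∑ bc, negMulLog (p bc)
      ≤ ∑ bc, (-p bc * log (x bc.1) + -p bc * log (y bc.2) + (x bc.1 * y bc.2 - p bc)) :=
        Finset.sum_le_sum fun bc _ => hterm bc
    _ = ∑ b, negMulLog (x b) + ∑ c, negMulLog (y c) := by
        simp only [Finset.sum_add_distrib, Finset.sum_sub_distrib, neg_mul,
          Finset.sum_neg_distrib, hmarg_x, hmarg_y, hprod, hp1, negMulLog]
        ring

end Finite

end Entropy

section Ranks

open Finset

variable {A : Type*} [LinearOrder A] {L : ℕ}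

def prefixRank (v : Fin L → A) (i : Fin L) : ℕ := #{j | j ≤ i ∧ v j ≤ v i}

def cumulativeCount (v : Fin L → A) (x : A) : ℕ := #{j | v j ≤ x}

theorem prefixRank_lt_succ (v : Fin L → A) (i : Fin L) : prefixRank v i < L + 1 :=
  Nat.lt_succ_of_le ((card_filter_le _ _).trans_eq (card_fin L))

theorem cumulativeCount_lt_succ (v : Fin L → A) (x : A) : cumulativeCount v x < L + 1 :=
  Nat.lt_succ_of_le ((card_filter_le _ _).trans_eq (card_fin L))

theorem prefixRank_last (v : Fin (L + 1) → A) :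
    prefixRank v (Fin.last L) = cumulativeCount v (v (Fin.last L)) := by
  simp [prefixRank, cumulativeCount, Fin.le_last]

theorem prefixRank_init (v : Fin (L + 1) → A) (i : Fin L) :
    prefixRank (Fin.init v) i = prefixRank v i.castSucc := by
  simp only [prefixRank, card_filter, Fin.sum_univ_castSucc, Fin.init, Fin.castSucc_le_castSucc_iff,
    (Fin.castSucc_lt_last i).not_ge, false_and, if_false, add_zero]
  exact card_filter _ _

theorem cumulativeCount_eq_init_add (v : Fin (L + 1) → A) (x : A) :
    cumulativeCount v x =
      cumulativeCount (Fin.init v) x + if v (Fin.last L) ≤ x then 1 else 0 := by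
  rw [cumulativeCount, cumulativeCount, card_filter, card_filter, Fin.sum_univ_castSucc]
  rfl

theorem cumulativeCount_lt_of_lt (v : Fin L → A) {x : A} {k : Fin L} (h : x < v k) :
    cumulativeCount v x < cumulativeCount v (v k) :=
  card_lt_card <| (ssubset_iff_of_subset (monotone_filter_right _ fun _ _ hj => hj.trans h.le)).2
    ⟨k, by simp, by simp [h.not_ge]⟩

-- Cumulative counts increase strictly along the values taken by the word, so the last letter is
-- the only value whose cumulative count equals the last rank; then induct on `Fin.init`.
theorem prefixRank_cumulativeCount_injective :
    ∀ {L : ℕ}, Function.Injective fun v : Fin L → A => (prefixRank v, cumulativeCount v)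
  | 0, v, w, _ => Subsingleton.elim v w
  | L + 1, v, w, h => by
    obtain ⟨hr, hc⟩ := Prod.ext_iff.mp h
    simp only at hr hc
    have hlast : v (Fin.last L) = w (Fin.last L) := by
      have key : cumulativeCount v (v (Fin.last L)) = cumulativeCount v (w (Fin.last L)) := by
        rw [← prefixRank_last, hr, prefixRank_last, hc]
      rcases lt_trichotomy (v (Fin.last L)) (w (Fin.last L)) with hlt | heq | hgt
      · have := cumulativeCount_lt_of_lt w hlt
        rw [← hc] at this; omega
      · exact heq
      · have := cumulativeCount_lt_of_lt v hgt
        omega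
    have hinit : Fin.init v = Fin.init w := by
      refine prefixRank_cumulativeCount_injective
        (Prod.ext (funext fun i => ?_) (funext fun x => ?_))
      · simp only [prefixRank_init, hr]
      · have := congrFun hc x
        rw [cumulativeCount_eq_init_add v, cumulativeCount_eq_init_add w, hlast] at this
        exact Nat.add_right_cancel this
    rw [← Fin.snoc_init_self v, ← Fin.snoc_init_self w, hinit, hlast]

theorem rankVar_eq_prefixRank {Ω : Type*} (S : ℕ → Ω → A) (ω : Ω) (i : Fin L) :
    rankVar S (i + 1) ω = prefixRank (fun k : Fin L => S (k + 1) ω) i := by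
  refine (card_bij (fun j _ => j.val + 1) ?_ ?_ ?_).symm
  · intro j hj
    simp only [mem_filter, mem_univ, true_and, Fin.le_iff_val_le_val] at hj
    simp only [mem_filter, mem_Icc]
    exact ⟨⟨by omega, by omega⟩, hj.2⟩
  · intro j₁ _ j₂ _ h
    exact Fin.ext (by omega)
  · intro k hk
    simp only [mem_filter, mem_Icc] at hk
    refine ⟨⟨k - 1, by omega⟩, ?_, Nat.sub_add_cancel hk.1.1⟩
    simp only [mem_filter, mem_univ, true_and, Fin.le_iff_val_le_val]
    exact ⟨by omega, by simpa [Nat.sub_add_cancel hk.1.1] using hk.2⟩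

def rankCode (v : Fin L → A) : (Fin L → Fin (L + 1)) × (A → Fin (L + 1)) :=
  (fun i => ⟨prefixRank v i, prefixRank_lt_succ v i⟩,
    fun x => ⟨cumulativeCount v x, cumulativeCount_lt_succ v x⟩)

theorem rankCode_injective : Function.Injective (rankCode : (Fin L → A) → _) := by
  intro v w h
  refine prefixRank_cumulativeCount_injective ?_
  simp only [rankCode, Prod.mk.injEq, funext_iff, Fin.mk.injEq] at h
  exact Prod.ext (funext h.1) (funext h.2)

end Ranks

section RankEntropy

variable {Ω A : Type*} [MeasurableSpace Ω] {μ : Measure Ω} [LinearOrder A] {L : ℕ}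

theorem shEntropy_prefixRank_eq_shEntropy_rankCode_fst (X : Ω → Fin L → A) :
    shEntropy μ (fun ω => prefixRank (X ω)) = shEntropy μ (fun ω => (rankCode (X ω)).1) :=
  shEntropy_comp_of_injective (fun ω => (rankCode (X ω)).1) Fin.val_injective.comp_left

variable [IsProbabilityMeasure μ] [Fintype A] [MeasurableSpace A] [MeasurableSingletonClass A]
  {X : Ω → Fin L → A}

theorem shEntropy_prefixRank_le (hX : Measurable X) :
    shEntropy μ (fun ω => prefixRank (X ω)) ≤ shEntropy μ X := by
  rw [shEntropy_prefixRank_eq_shEntropy_rankCode_fst]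
  exact shEntropy_comp_le hX fun v => (rankCode v).1

theorem shEntropy_le_shEntropy_prefixRank_add (hX : Measurable X) :
    shEntropy μ X ≤
      shEntropy μ (fun ω => prefixRank (X ω)) + Fintype.card A * logb 2 ((L : ℝ) + 1) := by
  calc shEntropy μ X = shEntropy μ (rankCode ∘ X) :=
        (shEntropy_comp_of_injective X rankCode_injective).symm
    _ ≤ shEntropy μ (fun ω => (rankCode (X ω)).1) + shEntropy μ (fun ω => (rankCode (X ω)).2) :=
        shEntropy_prod_le_add ((measurable_of_finite fun v => (rankCode v).1).comp hX)
          ((measurable_of_finite fun v => (rankCode v).2).comp hX)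
    _ ≤ shEntropy μ (fun ω => prefixRank (X ω)) + logb 2 (Fintype.card (A → Fin (L + 1))) := by
        rw [shEntropy_prefixRank_eq_shEntropy_rankCode_fst]
        gcongr
        exact shEntropy_le_logb_card ((measurable_of_finite fun v => (rankCode v).2).comp hX)
    _ = _ := by
        rw [Fintype.card_fun, Fintype.card_fin, Nat.cast_pow, logb_pow]
        push_cast
        ring

end RankEntropy

section OrbitBlock

variable {Ω A : Type*} {T : Ω → Ω} {g : Ω → A}

def orbitBlock (T : Ω → Ω) (g : Ω → A) (L : ℕ) (ω : Ω) (i : Fin L) : A := g (T^[i] ω)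

theorem measurable_orbitBlock [MeasurableSpace Ω] [MeasurableSpace A] (hT : Measurable T)
    (hg : Measurable g) (L : ℕ) : Measurable (orbitBlock T g L) :=
  measurable_pi_lambda _ fun i => hg.comp (hT.iterate i)

theorem orbitBlock_add (T : Ω → Ω) (g : Ω → A) (m n : ℕ) (ω : Ω) :
    orbitBlock T g (m + n) ω = Fin.append (orbitBlock T g m ω) (orbitBlock T g n (T^[m] ω)) := by
  funext k
  refine Fin.addCases (fun i => ?_) (fun j => ?_) k
  · simp [orbitBlock]
  · simp [orbitBlock, ← Function.iterate_add_apply, add_comm]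

theorem subadditive_shEntropy_orbitBlock [MeasurableSpace Ω] {μ : Measure Ω}
    [IsProbabilityMeasure μ] [Fintype A] [MeasurableSpace A] [MeasurableSingletonClass A]
    (hT : MeasurePreserving T μ μ) (hg : Measurable g) :
    Subadditive fun L => shEntropy μ (orbitBlock T g L) := by
  intro m n
  have hm := measurable_orbitBlock hT.measurable hg m
  have hn := measurable_orbitBlock hT.measurable hg n
  calc shEntropy μ (orbitBlock T g (m + n))
      = shEntropy μ (Fin.appendEquiv m n ∘
          fun ω => (orbitBlock T g m ω, (orbitBlock T g n ∘ T^[m]) ω)) := by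
        congr 1
        funext ω
        exact orbitBlock_add T g m n ω
    _ = shEntropy μ (fun ω => (orbitBlock T g m ω, (orbitBlock T g n ∘ T^[m]) ω)) :=
        shEntropy_comp_of_injective _ (Fin.appendEquiv m n).injective
    _ ≤ shEntropy μ (orbitBlock T g m) + shEntropy μ (orbitBlock T g n ∘ T^[m]) :=
        shEntropy_prod_le_add hm (hn.comp (hT.measurable.iterate m))
    _ = shEntropy μ (orbitBlock T g m) + shEntropy μ (orbitBlock T g n) := by
        rw [shEntropy_comp_measurePreserving hn (hT.iterate m)]

end OrbitBlock

theorem tendsto_div_sub_one_of_sub_le_of_le {a b e : ℕ → ℝ} {h : ℝ}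
    (ha : Tendsto (fun L => a L / L) atTop (𝓝 h))
    (he : Tendsto (fun L => e L / ((L : ℝ) - 1)) atTop (𝓝 0))
    (hlo : ∀ L, a L - e L ≤ b L) (hhi : ∀ L, b L ≤ a L) :
    Tendsto (fun L => b L / ((L : ℝ) - 1)) atTop (𝓝 h) := by
  have ha' : Tendsto (fun L => a L / ((L : ℝ) - 1)) atTop (𝓝 h) := by
    have := ha.mul (tendsto_natCast_div_add_atTop (-1 : ℝ))
    rw [mul_one] at this
    refine this.congr' ?_
    filter_upwards [eventually_ge_atTop 2] with L hL
    have hL' : (2 : ℝ) ≤ L := by exact_mod_cast hL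
    rw [← sub_eq_add_neg, div_mul_div_comm, mul_comm, mul_div_mul_left _ _ (by positivity)]
  have hlo' : Tendsto (fun L => (a L - e L) / ((L : ℝ) - 1)) atTop (𝓝 h) := by
    simpa only [sub_div, sub_zero] using ha'.sub he
  have hpos : ∀ᶠ L : ℕ in atTop, (0 : ℝ) ≤ L - 1 := by
    filter_upwards [eventually_ge_atTop 1] with L hL
    rw [sub_nonneg]
    exact_mod_cast hL
  refine tendsto_of_tendsto_of_tendsto_of_le_of_le' hlo' ha' ?_ ?_ <;>
    filter_upwards [hpos] with L hL
  · exact div_le_div_of_nonneg_right (hlo L) hL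
  · exact div_le_div_of_nonneg_right (hhi L) hL

theorem tendsto_mul_logb_succ_div_sub_one (c : ℝ) :
    Tendsto (fun L : ℕ => c * logb 2 ((L : ℝ) + 1) / ((L : ℝ) - 1)) atTop (𝓝 0) := by
  have h := (tendsto_pow_log_div_mul_add_atTop 1 (-2) 1 one_ne_zero).comp
    (tendsto_atTop_add_const_right atTop 1 (tendsto_natCast_atTop_atTop (R := ℝ)))
  have h' := h.const_mul (c / log 2)
  rw [mul_zero] at h'
  refine h'.congr fun L => ?_
  simp only [Function.comp_apply, pow_one, logb]
  ring

/-- For an ergodic stationary finite-alphabet process `S_n = g ∘ T^{n-1}`, the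
permutation entropy rate exists and equals the Shannon entropy rate:
`lim_L (1/(L−1)) H(R_1,…,R_L) = lim_L (1/L) H(S_1,…,S_L)`. -/
theorem permutation_entropy_rate_eq_entropy_rate {Ω A : Type*} [MeasurableSpace Ω]
    [Fintype A] [LinearOrder A] [MeasurableSpace A] [MeasurableSingletonClass A]
    (μ : Measure Ω) [IsProbabilityMeasure μ]
    (T : Ω → Ω) (hT : Ergodic T μ) (g : Ω → A) (hg : Measurable g)
    (S : ℕ → Ω → A) (hSdef : ∀ n ω, S n ω = g (T^[n - 1] ω)) :
    ∃ h : ℝ,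
      Filter.Tendsto
        (fun L : ℕ =>
          (1 / ((L : ℝ) - 1)) * shEntropy μ (fun ω => fun i : Fin L => rankVar S (i.1 + 1) ω))
        Filter.atTop (nhds h)
      ∧ Filter.Tendsto
          (fun L : ℕ =>
            (1 / (L : ℝ)) * shEntropy μ (fun ω => fun i : Fin L => S (i.1 + 1) ω))
          Filter.atTop (nhds h) := by
  have hword : ∀ L, (fun ω (i : Fin L) => S (i.1 + 1) ω) = orbitBlock T g L := fun L => by
    funext ω i
    simp [hSdef, orbitBlock]
  have hrank : ∀ L, shEntropy μ (fun ω (i : Fin L) => rankVar S (i.1 + 1) ω) =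
      shEntropy μ (fun ω => prefixRank (orbitBlock T g L ω)) := fun L => by
    simp only [rankVar_eq_prefixRank, ← hword]
  have hmeas := measurable_orbitBlock hT.measurable hg
  have hsub := subadditive_shEntropy_orbitBlock hT.toMeasurePreserving hg
  have hlim := hsub.tendsto_lim
    ⟨0, by rintro _ ⟨L, rfl⟩; exact div_nonneg shEntropy_nonneg L.cast_nonneg⟩
  refine ⟨hsub.lim, ?_, by simpa only [hword, one_div_mul_eq_div] using hlim⟩
  simp only [hrank, one_div_mul_eq_div]
  refine tendsto_div_sub_one_of_sub_le_of_le hlim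
    (tendsto_mul_logb_succ_div_sub_one (Fintype.card A)) (fun L => ?_)
    (fun L => shEntropy_prefixRank_le (hmeas L))
  linarith [shEntropy_le_shEntropy_prefixRank_add (μ := μ) (hmeas L)]
end

section
/- Let I = [a,b] ⊂ ℝ, let c_1 < c_2 < ... < c_{m−1} be points subdividing I into m intervals, let f : I → I be a map, and for a permutation π of {0,...,L−1} let P_π = {x ∈ I : f^{π(0)}(x) < f^{π(1)}(x) < ... < f^{π(L−1)}(x)}. Then each P_π intersects at most (L+1)^{m−1} distinct cells of the partition ⋁_{i=0}^{L−1} f^{−i}(γ), where γ is the partition of I into the m subintervals. -/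
open Filter Real

/-- The order set `P_perm = {x : f^{perm(0)}(x) < f^{perm(1)}(x) < … < f^{perm(L−1)}(x)}`. -/
def permSet (f : ℝ → ℝ) (L : ℕ) (perm : Equiv.Perm (Fin L)) : Set ℝ :=
  {x : ℝ | ∀ i j : Fin L, i < j → f^[(perm i : ℕ)] x < f^[(perm j : ℕ)] x}

/-- The cell of the join partition `⋁_{i=0}^{L-1} f^{-i}(γ)` with itinerary `j`, where
`γ` is the interval partition with cut points `c_0 < c_1 < … < c_m`. -/
def joinIntervalCell (f : ℝ → ℝ) {m : ℕ} (c : Fin (m + 1) → ℝ) (L : ℕ)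
    (j : Fin L → Fin m) : Set ℝ :=
  {x : ℝ | ∀ i : Fin L, f^[(i : ℕ)] x ∈ Set.Ico (c (j i).castSucc) (c (j i).succ)}

/-- Each set `P_π` intersects at most `(L+1)^{m−1}` cells of the join partition
`⋁_{i=0}^{L−1} f^{−i}(γ)`, where `γ` is the partition of `[a,b]` into `m` subintervals
determined by the `m − 1` interior cut points `c_1 < … < c_{m−1}`. -/
theorem permSet_meets_few_cells (f : ℝ → ℝ) (m L : ℕ)
    (c : Fin (m + 1) → ℝ) (hc : StrictMono c) (perm : Equiv.Perm (Fin L)) :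
    Set.ncard {j : Fin L → Fin m | (permSet f L perm ∩ joinIntervalCell f c L j).Nonempty}
      ≤ (L + 1) ^ (m - 1) := by
  classical
  set S := {j : Fin L → Fin m | (permSet f L perm ∩ joinIntervalCell f c L j).Nonempty} with hS
  -- The "signature" map: for each interior cut point, count iterates below it.
  set Φ : (Fin L → Fin m) → (Fin (m - 1) → Fin (L + 1)) := fun j t =>
    ⟨(Finset.univ.filter (fun i : Fin L => (j i : ℕ) ≤ (t : ℕ))).card, by
      have h := Finset.card_filter_le Finset.univ (fun i : Fin L => (j i : ℕ) ≤ (t : ℕ))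
      simp only [Finset.card_univ, Fintype.card_fin] at h
      omega⟩ with hΦ
  -- Key: on S, membership of j i in the lower intervals is determined by Φ j.
  have key : ∀ j ∈ S, ∀ (i : Fin L) (t : Fin (m - 1)),
      ((j i : ℕ) ≤ (t : ℕ) ↔ (perm.symm i : ℕ) < (Φ j t : ℕ)) := by
    intro j hj i t
    obtain ⟨x, hx1, hx2⟩ := hj
    have htm : (t : ℕ) + 1 < m + 1 := by have := t.isLt; omega
    set C : ℝ := c ⟨(t : ℕ) + 1, htm⟩ with hC
    -- step 1: j i ≤ t ↔ f^[i] x < C, for every i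
    have step1 : ∀ i : Fin L, ((j i : ℕ) ≤ (t : ℕ) ↔ f^[(i : ℕ)] x < C) := by
      intro i
      have hcell := hx2 i
      obtain ⟨hlo, hhi⟩ := hcell
      constructor
      · intro h
        have : c (j i).succ ≤ C := by
          apply hc.monotone
          rw [Fin.le_def]
          simpa using Nat.succ_le_succ h
        exact lt_of_lt_of_le hhi this
      · intro h
        by_contra hcon
        push_neg at hcon
        have : C ≤ c (j i).castSucc := by
          apply hc.monotone
          rw [Fin.le_def]
          simpa using hcon
        exact absurd (lt_of_lt_of_le h (le_trans this hlo)) (lt_irrefl _)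
    -- the set A of positions k (in the sorted order) with value < C
    set A : Finset (Fin L) :=
      Finset.univ.filter (fun k : Fin L => f^[(perm k : ℕ)] x < C) with hA
    have hdown : ∀ k k' : Fin L, k' ≤ k → k ∈ A → k' ∈ A := by
      intro k k' hle hk
      simp only [hA, Finset.mem_filter, Finset.mem_univ, true_and] at hk ⊢
      rcases eq_or_lt_of_le hle with rfl | hlt
      · exact hk
      · exact lt_trans (hx1 k' k hlt) hk
    have hmemA : ∀ k : Fin L, k ∈ A ↔ (k : ℕ) < A.card := by
      intro k
      constructor
      · intro hk
        have hsub : Finset.Iic k ⊆ A := fun k' hk' =>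
          hdown k k' (Finset.mem_Iic.mp hk') hk
        have := Finset.card_le_card hsub
        rwa [Fin.card_Iic, Nat.succ_le_iff] at this
      · intro hk
        by_contra hkn
        have hsub : A ⊆ Finset.Iio k := by
          intro k' hk'
          rw [Finset.mem_Iio]
          by_contra hge
          push_neg at hge
          exact hkn (hdown k' k hge hk')
        have := Finset.card_le_card hsub
        rw [Fin.card_Iio] at this
        omega
    -- card of filter = card of A via perm.symm
    have hcard : (Φ j t : ℕ) = A.card := by
      simp only [hΦ]
      apply Finset.card_equiv perm.symm
      intro a
      simp only [hA, Finset.mem_filter, Finset.mem_univ, true_and,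
        Equiv.apply_symm_apply, step1 a]
    rw [step1 i, hcard, ← hmemA (perm.symm i)]
    simp [hA, Equiv.apply_symm_apply]
  -- Φ is injective on S
  have hinj : Set.InjOn Φ S := by
    intro j₁ h₁ j₂ h₂ he
    funext i
    have hiff : ∀ t : Fin (m - 1), ((j₁ i : ℕ) ≤ (t : ℕ) ↔ (j₂ i : ℕ) ≤ (t : ℕ)) := by
      intro t
      rw [key j₁ h₁ i t, key j₂ h₂ i t, he]
    by_contra hne
    have hne' : (j₁ i : ℕ) ≠ (j₂ i : ℕ) := fun h => hne (Fin.ext h)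
    rcases Nat.lt_or_ge (j₁ i : ℕ) (j₂ i : ℕ) with h | h
    · have hv : (j₁ i : ℕ) < m - 1 := by have := (j₂ i).isLt; omega
      have := (hiff ⟨(j₁ i : ℕ), hv⟩).mp le_rfl
      simp at this; omega
    · have hlt : (j₂ i : ℕ) < (j₁ i : ℕ) := by omega
      have hv : (j₂ i : ℕ) < m - 1 := by have := (j₁ i).isLt; omega
      have := (hiff ⟨(j₂ i : ℕ), hv⟩).mpr le_rfl
      simp at this; omega
  calc S.ncard ≤ (Set.univ : Set (Fin (m - 1) → Fin (L + 1))).ncard :=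
        Set.ncard_le_ncard_of_injOn Φ (fun a _ => Set.mem_univ _) hinj Set.finite_univ
    _ = (L + 1) ^ (m - 1) := by
        simp [Set.ncard_univ, Nat.card_eq_fintype_card]
end
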